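/- arXiv:1502.03636 — 3 statements merged into one kernel-verified Lean document; each statement's English description precedes it below -/
import Mathlib

section
/- Let a_i, b_j ∈ Act for each i < n and j < m. (1) If {a_i : i < n} ≠ {b_j : j < m} then □_{i<n} a_i.p_i ∧ □_{j<m} b_j.q_j =_RS ⊥. (2) □_{i<n} a_i.(p_i ∧ q_i) ⊑_RS (□_{i<n} a_i.p_i) ∧ (□_{i<n} a_i.q_i). -/
open Classical

/-- Visible actions plus the invisible action τ. -/
inductive ActT (Act : Type) : Type where
  | act : Act → ActT Act
  | tau : ActT Act

/-- Processes of the recursion-free calculus CLL. -/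
inductive Proc (Act : Type) : Type where
  | nil  : Proc Act                                -- 0
  | bot  : Proc Act                                -- ⊥
  | pre  : ActT Act → Proc Act → Proc Act          -- α.t
  | ec   : Proc Act → Proc Act → Proc Act          -- t □ t
  | conj : Proc Act → Proc Act → Proc Act          -- t ∧ t
  | disj : Proc Act → Proc Act → Proc Act          -- t ∨ t
  | par  : Set Act → Proc Act → Proc Act → Proc Act -- t ∥_A t

namespace Proc

variable {Act : Type}

/-- Whether a process has a τ-transition (structural stratification used for
the negative premises of the SOS rules). -/
def hasTau : Proc Act → Prop
  | nil => False
  | bot => False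
  | pre a _ => a = ActT.tau
  | ec t₁ t₂ => hasTau t₁ ∨ hasTau t₂
  | conj t₁ t₂ => hasTau t₁ ∨ hasTau t₂
  | disj _ _ => True
  | par _ t₁ t₂ => hasTau t₁ ∨ hasTau t₂

/-- The transition relation, given by the SOS rules of CLL_R. -/
inductive Trans : Proc Act → ActT Act → Proc Act → Prop where
  | pre : Trans (pre α t) α t
  | ecL : Trans t₁ (ActT.act a) t₁' → ¬ hasTau t₂ →
      Trans (ec t₁ t₂) (ActT.act a) t₁'
  | ecR : ¬ hasTau t₁ → Trans t₂ (ActT.act a) t₂' →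
      Trans (ec t₁ t₂) (ActT.act a) t₂'
  | ecTauL : Trans t₁ ActT.tau t₁' → Trans (ec t₁ t₂) ActT.tau (ec t₁' t₂)
  | ecTauR : Trans t₂ ActT.tau t₂' → Trans (ec t₁ t₂) ActT.tau (ec t₁ t₂')
  | conjAct : Trans t₁ (ActT.act a) t₁' → Trans t₂ (ActT.act a) t₂' →
      Trans (conj t₁ t₂) (ActT.act a) (conj t₁' t₂')
  | conjTauL : Trans t₁ ActT.tau t₁' → Trans (conj t₁ t₂) ActT.tau (conj t₁' t₂)
  | conjTauR : Trans t₂ ActT.tau t₂' → Trans (conj t₁ t₂) ActT.tau (conj t₁ t₂')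
  | disjL : Trans (disj t₁ t₂) ActT.tau t₁
  | disjR : Trans (disj t₁ t₂) ActT.tau t₂
  | parTauL : Trans t₁ ActT.tau t₁' → Trans (par A t₁ t₂) ActT.tau (par A t₁' t₂)
  | parTauR : Trans t₂ ActT.tau t₂' → Trans (par A t₁ t₂) ActT.tau (par A t₁ t₂')
  | parL : a ∉ A → Trans t₁ (ActT.act a) t₁' → ¬ hasTau t₂ →
      Trans (par A t₁ t₂) (ActT.act a) (par A t₁' t₂)
  | parR : a ∉ A → ¬ hasTau t₁ → Trans t₂ (ActT.act a) t₂' →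
      Trans (par A t₁ t₂) (ActT.act a) (par A t₁ t₂')
  | parSync : a ∈ A → Trans t₁ (ActT.act a) t₁' → Trans t₂ (ActT.act a) t₂' →
      Trans (par A t₁ t₂) (ActT.act a) (par A t₁' t₂')

/-- The ready set I(p). -/
def ready (p : Proc Act) : Set (ActT Act) := {α | ∃ q, Trans p α q}

/-- p is stable if it has no τ-transition. -/
def Stable (p : Proc Act) : Prop := ∀ q, ¬ Trans p ActT.tau q

/-- The inconsistency predicate F, as the least predicate closed under the
predicative rules of CLL_R. -/
inductive Fp : Proc Act → Prop where
  | bot : Fp bot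
  | pre : Fp t → Fp (pre α t)
  | disj : Fp t₁ → Fp t₂ → Fp (disj t₁ t₂)
  | ecL : Fp t₁ → Fp (ec t₁ t₂)
  | ecR : Fp t₂ → Fp (ec t₁ t₂)
  | parL : Fp t₁ → Fp (par A t₁ t₂)
  | parR : Fp t₂ → Fp (par A t₁ t₂)
  | conjL : Fp t₁ → Fp (conj t₁ t₂)
  | conjR : Fp t₂ → Fp (conj t₁ t₂)
  | conjReady : Stable (conj t₁ t₂) → ready t₁ ≠ ready t₂ → Fp (conj t₁ t₂)
  | conjSucc : Trans (conj t₁ t₂) α s → (∀ y, Trans (conj t₁ t₂) α y → Fp y) →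
      Fp (conj t₁ t₂)
  | conjStable :
      (∀ y, Relation.ReflTransGen (fun x z => Trans x ActT.tau z) (conj t₁ t₂) y →
        Stable y → Fp y) →
      Fp (conj t₁ t₂)

/-- One τ-step with both endpoints consistent. -/
def tauStepF (p q : Proc Act) : Prop := Trans p ActT.tau q ∧ ¬ Fp p ∧ ¬ Fp q

/-- p ⇒_F| q : a sequence of τ-transitions from p to q, all states outside F,
with q stable. -/
def epsF (p q : Proc Act) : Prop :=
  Relation.ReflTransGen tauStepF p q ∧ ¬ Fp p ∧ ¬ Fp q ∧ Stable q

/-- p =a⇒_F| q. -/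
def wkF (a : Act) (p q : Proc Act) : Prop :=
  ∃ r s, Relation.ReflTransGen tauStepF p r ∧ ¬ Fp p ∧ ¬ Fp r ∧
    Trans r (ActT.act a) s ∧ ¬ Fp s ∧
    Relation.ReflTransGen tauStepF s q ∧ ¬ Fp q ∧ Stable q

/-- R is a stable ready simulation. -/
def StableRS (R : Proc Act → Proc Act → Prop) : Prop :=
  ∀ p q, R p q →
    Stable p ∧ Stable q ∧
    (¬ Fp p → ¬ Fp q) ∧
    (∀ a p', wkF a p p' → ∃ q', wkF a q q' ∧ R p' q') ∧
    (¬ Fp p → ready p = ready q)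

/-- p ⊏̃_RS q. -/
def rsLT (p q : Proc Act) : Prop := ∃ R, StableRS R ∧ R p q

/-- p ⊑_RS q. -/
def rsLE (p q : Proc Act) : Prop :=
  ∀ p', epsF p p' → ∃ q', epsF q q' ∧ rsLT p' q'

/-- p =_RS q. -/
def rsEq (p q : Proc Act) : Prop := rsLE p q ∧ rsLE q p

/-- Basic process terms T(Σ_B): no ⊥ and no ∧. -/
inductive Basic : Proc Act → Prop where
  | nil : Basic nil
  | pre : Basic t → Basic (pre α t)
  | disj : Basic t₁ → Basic t₂ → Basic (disj t₁ t₂)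
  | ec : Basic t₁ → Basic t₂ → Basic (ec t₁ t₂)
  | par : Basic t₁ → Basic t₂ → Basic (par A t₁ t₂)

/-- General external choice □ over a finite sequence (left-nested). -/
def ecList : List (Proc Act) → Proc Act
  | [] => nil
  | t :: ts => ts.foldl ec t

/-- General disjunction ⋁ over a nonempty finite sequence (left-nested). -/
def djList : List (Proc Act) → Proc Act
  | [] => bot
  | t :: ts => ts.foldl disj t

/-- □_{i<n} a_i.t_i for a sequence of prefixed terms. -/
def ecPre (l : List (Act × Proc Act)) : Proc Act :=
  ecList (l.map fun x => pre (ActT.act x.1) x.2)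

/-- The expansion term E = ((□Ω₁) □ (□Ω₂)) □ (□Ω₃). -/
noncomputable def expTerm (A : Set Act) (l₁ l₂ : List (Act × Proc Act)) : Proc Act :=
  ec (ec
      (ecList ((l₁.filter fun x => decide (x.1 ∉ A)).map
        fun x => pre (ActT.act x.1) (par A x.2 (ecPre l₂))))
      (ecList ((l₂.filter fun x => decide (x.1 ∉ A)).map
        fun x => pre (ActT.act x.1) (par A (ecPre l₁) x.2))))
    (ecList (l₁.flatMap fun x =>
      (l₂.filter fun y => decide (y.1 = x.1 ∧ x.1 ∈ A)).map
        fun y => pre (ActT.act x.1) (par A x.2 y.2)))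

/-- Normal forms NF_B. -/
inductive NFB : Proc Act → Prop where
  | mk (ls : List (List (Act × Proc Act))) (hne : ls ≠ [])
      (hnodup : ∀ l ∈ ls, (l.map Prod.fst).Nodup)
      (hsub : ∀ l ∈ ls, ∀ x ∈ l, NFB x.2) :
      NFB (djList (ls.map ecPre))

/-- NF = NF_B ∪ {⊥}. -/
def NF (p : Proc Act) : Prop := NFB p ∨ p = bot

/-- Derivability ⊢ t ≤ t' in the proof system AX_CLL. -/
inductive Deriv : Proc Act → Proc Act → Prop where
  | refl (t) : Deriv t t
  | trans : Deriv t t' → Deriv t' t'' → Deriv t t''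
  | mono_pre : Deriv t t' → Deriv (pre α t) (pre α t')
  | mono_ec : Deriv s s' → Deriv t t' → Deriv (ec s t) (ec s' t')
  | mono_conj : Deriv s s' → Deriv t t' → Deriv (conj s t) (conj s' t')
  | mono_disj : Deriv s s' → Deriv t t' → Deriv (disj s t) (disj s' t')
  | mono_par : Deriv s s' → Deriv t t' → Deriv (par A s t) (par A s' t')
  -- external choice
  | ec_comm : Deriv (ec x y) (ec y x)
  | ec_assoc₁ : Deriv (ec (ec x y) z) (ec x (ec y z))
  | ec_assoc₂ : Deriv (ec x (ec y z)) (ec (ec x y) z)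
  | ec_idem₁ : Deriv (ec x x) x
  | ec_idem₂ : Deriv x (ec x x)
  | ec_nil₁ : Deriv (ec x nil) x
  | ec_nil₂ : Deriv x (ec x nil)
  | ec_bot₁ : Deriv (ec x bot) bot
  | ec_bot₂ : Deriv bot (ec x bot)
  -- disjunction
  | disj_comm : Deriv (disj x y) (disj y x)
  | disj_assoc₁ : Deriv (disj x (disj y z)) (disj (disj x y) z)
  | disj_assoc₂ : Deriv (disj (disj x y) z) (disj x (disj y z))
  | disj_idem₁ : Deriv (disj x x) x
  | disj_idem₂ : Deriv x (disj x x)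
  | disj_bot₁ : Deriv (disj x bot) x
  | disj_bot₂ : Deriv x (disj x bot)
  | disj_le : Deriv x (disj x y)
  -- conjunction
  | conj_comm : Deriv (conj x y) (conj y x)
  | conj_idem₁ : Deriv (conj x x) x
  | conj_idem₂ : Deriv x (conj x x)
  | conj_bot₁ : Deriv (conj x bot) bot
  | conj_bot₂ : Deriv bot (conj x bot)
  -- prefixing
  | pre_bot₁ : Deriv (pre (ActT.act a) bot) bot
  | pre_bot₂ : Deriv bot (pre (ActT.act a) bot)
  | tau_pre₁ : Deriv (pre ActT.tau x) x
  | tau_pre₂ : Deriv x (pre ActT.tau x)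
  -- parallel
  | par_comm : Deriv (par A x y) (par A y x)
  | par_bot₁ : Deriv (par A x bot) bot
  | par_bot₂ : Deriv bot (par A x bot)
  -- distribution over disjunction
  | ds_ec : Deriv (ec x (disj y z)) (disj (ec x y) (ec x z))
  | ds_conj : Deriv (conj x (disj y z)) (disj (conj x y) (conj x z))
  | ds_par : Deriv (par A x (disj y z)) (disj (par A x y) (par A x z))
  | ds_pre : Basic x → Basic y →
      Deriv (pre (ActT.act a) (disj x y)) (ec (pre (ActT.act a) x) (pre (ActT.act a) y))
  -- external choice and conjunction
  | ecc1₁ (l₁ l₂ : List (Act × Proc Act)) :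
      {a | a ∈ l₁.map Prod.fst} ≠ {a | a ∈ l₂.map Prod.fst} →
      Deriv (conj (ecPre l₁) (ecPre l₂)) bot
  | ecc1₂ (l₁ l₂ : List (Act × Proc Act)) :
      {a | a ∈ l₁.map Prod.fst} ≠ {a | a ∈ l₂.map Prod.fst} →
      Deriv bot (conj (ecPre l₁) (ecPre l₂))
  | ecc2 (l : List (Act × Proc Act × Proc Act)) :
      Deriv (ecPre (l.map fun x => (x.1, conj x.2.1 x.2.2)))
            (conj (ecPre (l.map fun x => (x.1, x.2.1)))
                  (ecPre (l.map fun x => (x.1, x.2.2))))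
  | ecc3 (l : List (Act × Proc Act × Proc Act)) :
      (l.map Prod.fst).Nodup →
      Deriv (conj (ecPre (l.map fun x => (x.1, x.2.1)))
                  (ecPre (l.map fun x => (x.1, x.2.2))))
            (ecPre (l.map fun x => (x.1, conj x.2.1 x.2.2)))
  -- expansion
  | exp1 (A : Set Act) (l₁ l₂ : List (Act × Proc Act)) :
      Deriv (par A (ecPre l₁) (ecPre l₂)) (expTerm A l₁ l₂)
  | exp2 (A : Set Act) (l₁ l₂ : List (Act × Proc Act)) :
      (∀ x ∈ l₁, Basic x.2) → (∀ x ∈ l₂, Basic x.2) →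
      Deriv (expTerm A l₁ l₂) (par A (ecPre l₁) (ecPre l₂))

end Proc

/-! For (1), the conjunction of the two choices is stable with different ready sets, hence
inconsistent, and ⊑_RS holds vacuously from an inconsistent process. For (2), both sides are
stable with the same ready set and every `a`-step of the left side, to `p_i ∧ q_i`, is also one of
the right side; conversely, if the right side is inconsistent then so is some `p_i ∧ q_i` (the only
nontrivial case being that all `a`-successors of the right side are). So the pair, together with
the identity on stable processes, is a stable ready simulation. -/

namespace Proc

variable {Act : Type}

section Transitions

theorem hasTau_of_trans {p q : Proc Act} {α : ActT Act} (h : Trans p α q) :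
    α = ActT.tau → hasTau p := by
  induction h <;> simp_all [hasTau]

theorem stable_of_not_hasTau {p : Proc Act} (h : ¬ hasTau p) : Stable p :=
  fun _ ht => h (hasTau_of_trans ht rfl)

theorem stable_conj {t₁ t₂ : Proc Act} (h₁ : ¬ hasTau t₁) (h₂ : ¬ hasTau t₂) :
    Stable (conj t₁ t₂) :=
  stable_of_not_hasTau fun h => h.elim h₁ h₂

theorem ready_conj {t₁ t₂ : Proc Act} (h₁ : ¬ hasTau t₁) (h₂ : ¬ hasTau t₂) :
    ready (conj t₁ t₂) = ready t₁ ∩ ready t₂ := by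
  ext α
  constructor
  · rintro ⟨s, hs⟩
    cases hs with
    | conjAct hx hy => exact ⟨⟨_, hx⟩, ⟨_, hy⟩⟩
    | conjTauL h => exact absurd (hasTau_of_trans h rfl) h₁
    | conjTauR h => exact absurd (hasTau_of_trans h rfl) h₂
  · rintro ⟨⟨_, hx⟩, ⟨_, hy⟩⟩
    cases α with
    | act a => exact ⟨_, Trans.conjAct hx hy⟩
    | tau => exact absurd (hasTau_of_trans hx rfl) h₁

theorem eq_of_stable_of_reflTransGen {p q : Proc Act} (hp : Stable p)
    (h : Relation.ReflTransGen tauStepF p q) : q = p := by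
  rcases Relation.ReflTransGen.cases_head h with rfl | ⟨_, hpc, -⟩
  · rfl
  · exact absurd hpc.1 (hp _)

theorem stable_of_wkF {a : Act} {p q : Proc Act} (h : wkF a p q) : Stable q := by
  obtain ⟨-, -, -, -, -, -, -, -, -, hq⟩ := h
  exact hq

end Transitions

section ExternalChoice

theorem foldl_ec_iff {P : Proc Act → Prop} (hP : ∀ x y, P (ec x y) ↔ P x ∨ P y)
    (ts : List (Proc Act)) (acc : Proc Act) :
    P (ts.foldl ec acc) ↔ P acc ∨ ∃ t ∈ ts, P t := by
  induction ts generalizing acc with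
  | nil => simp
  | cons t ts ih => simp only [List.foldl_cons, ih, hP, List.exists_mem_cons_iff]; tauto

theorem ecList_iff {P : Proc Act → Prop} (hP : ∀ x y, P (ec x y) ↔ P x ∨ P y)
    (hnil : ¬ P nil) (ts : List (Proc Act)) :
    P (ecList ts) ↔ ∃ t ∈ ts, P t := by
  cases ts with
  | nil => simpa [ecList] using hnil
  | cons t ts => rw [ecList, foldl_ec_iff hP, List.exists_mem_cons_iff]

theorem fp_ec_iff {t₁ t₂ : Proc Act} : Fp (ec t₁ t₂) ↔ Fp t₁ ∨ Fp t₂ := by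
  constructor
  · intro h
    cases h with
    | ecL h => exact Or.inl h
    | ecR h => exact Or.inr h
  · rintro (h | h)
    · exact Fp.ecL h
    · exact Fp.ecR h

theorem fp_pre_iff {α : ActT Act} {t : Proc Act} : Fp (pre α t) ↔ Fp t :=
  ⟨fun h => by cases h; assumption, Fp.pre⟩

theorem trans_pre_iff {α β : ActT Act} {t q : Proc Act} :
    Trans (pre α t) β q ↔ β = α ∧ q = t :=
  ⟨fun h => by cases h; exact ⟨rfl, rfl⟩, by rintro ⟨rfl, rfl⟩; exact Trans.pre⟩

theorem not_fp_nil : ¬ Fp (nil : Proc Act) := nofun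

/-- Because of the negative premises of the `□`-rules, `Trans · (act a) q` alone does not
split over `ec`; together with `hasTau` it does, which lets `ecList_iff` apply. -/
theorem hasTau_or_trans_ec_iff {t₁ t₂ q : Proc Act} {a : Act} :
    (hasTau (ec t₁ t₂) ∨ Trans (ec t₁ t₂) (ActT.act a) q) ↔
      (hasTau t₁ ∨ Trans t₁ (ActT.act a) q) ∨ (hasTau t₂ ∨ Trans t₂ (ActT.act a) q) := by
  by_cases h₁ : hasTau t₁
  · simp [hasTau, h₁]
  by_cases h₂ : hasTau t₂
  · simp [hasTau, h₂]
  simp only [hasTau, h₁, h₂, false_or]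
  constructor
  · intro h
    cases h with
    | ecL h => exact Or.inl h
    | ecR _ h => exact Or.inr h
  · rintro (h | h)
    · exact Trans.ecL h h₂
    · exact Trans.ecR h₁ h

theorem not_hasTau_ecPre (l : List (Act × Proc Act)) : ¬ hasTau (ecPre l) := by
  simp [ecPre, ecList_iff (P := hasTau) (fun _ _ => Iff.rfl) id, hasTau]

theorem stable_ecPre (l : List (Act × Proc Act)) : Stable (ecPre l) :=
  stable_of_not_hasTau (not_hasTau_ecPre l)

theorem trans_ecPre_iff {l : List (Act × Proc Act)} {a : Act} {q : Proc Act} :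
    Trans (ecPre l) (ActT.act a) q ↔ (a, q) ∈ l := by
  have h := ecList_iff (P := fun t => hasTau t ∨ Trans t (ActT.act a) q)
    (fun _ _ => hasTau_or_trans_ec_iff) (by simp only [hasTau]; nofun)
    (l.map fun x => pre (ActT.act x.1) x.2)
  rw [← ecPre, or_iff_right (not_hasTau_ecPre l)] at h
  simp [h, hasTau, trans_pre_iff]

theorem ready_ecPre (l : List (Act × Proc Act)) :
    ready (ecPre l) = ActT.act '' {a | a ∈ l.map Prod.fst} := by
  ext α
  constructor
  · rintro ⟨q, hq⟩
    cases α with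
    | act a => exact ⟨a, List.mem_map.mpr ⟨(a, q), trans_ecPre_iff.mp hq, rfl⟩, rfl⟩
    | tau => exact absurd hq (stable_ecPre l q)
  · rintro ⟨a, ha, rfl⟩
    obtain ⟨⟨a, q⟩, hm, rfl⟩ := List.mem_map.mp ha
    exact ⟨q, trans_ecPre_iff.mpr hm⟩

theorem fp_ecPre_iff {l : List (Act × Proc Act)} : Fp (ecPre l) ↔ ∃ x ∈ l, Fp x.2 := by
  simp [ecPre, ecList_iff (fun _ _ => fp_ec_iff) not_fp_nil, fp_pre_iff]

end ExternalChoice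

section Inconsistency

theorem fp_conj_of_stable {t₁ t₂ : Proc Act} (hst : Stable (conj t₁ t₂))
    (h : Fp (conj t₁ t₂)) :
    Fp t₁ ∨ Fp t₂ ∨ ready t₁ ≠ ready t₂ ∨
      ∃ α s, Trans (conj t₁ t₂) α s ∧ ∀ y, Trans (conj t₁ t₂) α y → Fp y := by
  generalize hQ : conj t₁ t₂ = Q at h hst
  induction h with
  | conjL h => cases hQ; exact Or.inl h
  | conjR h => cases hQ; exact Or.inr (Or.inl h)
  | conjReady _ hne => cases hQ; exact Or.inr (Or.inr (Or.inl hne))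
  | conjSucc hs hall => cases hQ; exact Or.inr (Or.inr (Or.inr ⟨_, _, hs, hall⟩))
  | conjStable _ ih => exact ih _ .refl hst hQ hst
  | _ => cases hQ

theorem rsLE_of_fp {p : Proc Act} (hp : Fp p) (q : Proc Act) : rsLE p q :=
  fun _ ⟨_, hnp, _⟩ => absurd hp hnp

theorem rsLE_of_stable_of_rsLT {p q : Proc Act} (hp : Stable p) (h : rsLT p q) : rsLE p q := by
  rintro p' ⟨hpp', hnp, -, -⟩
  obtain rfl := eq_of_stable_of_reflTransGen hp hpp'
  obtain ⟨R, hR, hpq⟩ := h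
  obtain ⟨-, hq, hF, -, -⟩ := hR _ _ hpq
  exact ⟨q, ⟨.refl, hF hnp, hF hnp, hq⟩, R, hR, hpq⟩

theorem rsLT_of_trans_subset {p q : Proc Act} (hp : Stable p) (hq : Stable q)
    (hF : ¬ Fp p → ¬ Fp q) (hready : ready p = ready q)
    (htrans : ∀ a s, Trans p (ActT.act a) s → Trans q (ActT.act a) s) : rsLT p q := by
  refine ⟨fun u v => (u = p ∧ v = q) ∨ (u = v ∧ Stable u), ?_, .inl ⟨rfl, rfl⟩⟩
  rintro u v (⟨rfl, rfl⟩ | ⟨rfl, hu⟩)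
  · refine ⟨hp, hq, hF, ?_, fun _ => hready⟩
    rintro a u' ⟨r, s, hur, hnu, -, hrs, hns, hsu', hnu', hu'⟩
    obtain rfl := eq_of_stable_of_reflTransGen hp hur
    exact ⟨u', ⟨v, s, .refl, hF hnu, hF hnu, htrans a s hrs, hns, hsu', hnu', hu'⟩,
      .inr ⟨rfl, hu'⟩⟩
  · exact ⟨hu, hu, id, fun _ u' hw => ⟨u', hw, .inr ⟨rfl, stable_of_wkF hw⟩⟩, fun _ => rfl⟩

end Inconsistency

section ChoiceConj

theorem fp_conj_ecPre_of_ne {l₁ l₂ : List (Act × Proc Act)}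
    (hne : {a | a ∈ l₁.map Prod.fst} ≠ {a | a ∈ l₂.map Prod.fst}) :
    Fp (conj (ecPre l₁) (ecPre l₂)) := by
  refine Fp.conjReady (stable_conj (not_hasTau_ecPre _) (not_hasTau_ecPre _)) fun h => hne ?_
  rw [ready_ecPre, ready_ecPre] at h
  exact Set.image_injective.mpr (fun _ _ => ActT.act.inj) h

theorem ready_ecPre_map {β : Type} (l : List (Act × β)) (f : Act × β → Proc Act) :
    ready (ecPre (l.map fun x => (x.1, f x))) = ActT.act '' {a | a ∈ l.map Prod.fst} := by
  simp [ready_ecPre, Function.comp_def]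

variable (l : List (Act × Proc Act × Proc Act))

theorem stable_conj_ecPre :
    Stable (conj (ecPre (l.map fun x => (x.1, x.2.1))) (ecPre (l.map fun x => (x.1, x.2.2)))) :=
  stable_conj (not_hasTau_ecPre _) (not_hasTau_ecPre _)

theorem ready_ecPre_conj :
    ready (ecPre (l.map fun x => (x.1, conj x.2.1 x.2.2))) =
      ready (conj (ecPre (l.map fun x => (x.1, x.2.1))) (ecPre (l.map fun x => (x.1, x.2.2)))) := by
  rw [ready_conj (not_hasTau_ecPre _) (not_hasTau_ecPre _), ready_ecPre_map, ready_ecPre_map,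
    ready_ecPre_map, Set.inter_self]

theorem trans_conj_ecPre_of_trans_ecPre {a : Act} {s : Proc Act}
    (h : Trans (ecPre (l.map fun x => (x.1, conj x.2.1 x.2.2))) (ActT.act a) s) :
    Trans (conj (ecPre (l.map fun x => (x.1, x.2.1))) (ecPre (l.map fun x => (x.1, x.2.2))))
      (ActT.act a) s := by
  obtain ⟨⟨b, p, q⟩, hm, he⟩ := List.mem_map.mp (trans_ecPre_iff.mp h)
  obtain ⟨rfl, rfl⟩ := Prod.mk.inj he
  exact .conjAct (trans_ecPre_iff.mpr (List.mem_map.mpr ⟨_, hm, rfl⟩))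
    (trans_ecPre_iff.mpr (List.mem_map.mpr ⟨_, hm, rfl⟩))

theorem fp_ecPre_conj_of_fp_conj_ecPre
    (h : Fp (conj (ecPre (l.map fun x => (x.1, x.2.1))) (ecPre (l.map fun x => (x.1, x.2.2))))) :
    Fp (ecPre (l.map fun x => (x.1, conj x.2.1 x.2.2))) := by
  rw [fp_ecPre_iff]
  rcases fp_conj_of_stable (stable_conj_ecPre l) h with h | h | hne | ⟨α, s, hs, hall⟩
  · obtain ⟨_, hm, hp⟩ := fp_ecPre_iff.mp h
    obtain ⟨x, hx, rfl⟩ := List.mem_map.mp hm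
    exact ⟨_, List.mem_map_of_mem hx, Fp.conjL hp⟩
  · obtain ⟨_, hm, hq⟩ := fp_ecPre_iff.mp h
    obtain ⟨x, hx, rfl⟩ := List.mem_map.mp hm
    exact ⟨_, List.mem_map_of_mem hx, Fp.conjR hq⟩
  · exact absurd (by rw [ready_ecPre_map, ready_ecPre_map]) hne
  · cases α with
    | tau => exact absurd hs (stable_conj_ecPre l s)
    | act a =>
      obtain ⟨s', hs'⟩ : ActT.act a ∈ ready (ecPre (l.map fun x => (x.1, conj x.2.1 x.2.2))) :=
        (ready_ecPre_conj l).symm ▸ ⟨s, hs⟩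
      exact ⟨_, trans_ecPre_iff.mp hs', hall s' (trans_conj_ecPre_of_trans_ecPre l hs')⟩

end ChoiceConj

/-- Interaction of general external choice with conjunction. -/
theorem stmt10 {Act : Type} :
    -- (1) distinct prefix sets yield inconsistency
    (∀ l₁ l₂ : List (Act × Proc Act),
      {a | a ∈ l₁.map Prod.fst} ≠ {a | a ∈ l₂.map Prod.fst} →
      rsEq (conj (ecPre l₁) (ecPre l₂)) bot) ∧
    -- (2)
    (∀ l : List (Act × Proc Act × Proc Act),
      rsLE (ecPre (l.map fun x => (x.1, conj x.2.1 x.2.2)))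
           (conj (ecPre (l.map fun x => (x.1, x.2.1)))
                 (ecPre (l.map fun x => (x.1, x.2.2))))) := by
  refine ⟨fun l₁ l₂ hne => ⟨rsLE_of_fp (fp_conj_ecPre_of_ne hne) _, rsLE_of_fp Fp.bot _⟩,
    fun l => rsLE_of_stable_of_rsLT (stable_ecPre _) ?_⟩
  exact rsLT_of_trans_subset (stable_ecPre _) (stable_conj_ecPre l)
    (mt (fp_ecPre_conj_of_fp_conj_ecPre l)) (ready_ecPre_conj l)
    (fun _ _ => trans_conj_ecPre_of_trans_ecPre l)

end Proc
end

section
/- If t and s are in NF_B, then there exists r ∈ NF (i.e., r ∈ NF_B or r ≡ ⊥) such that ⊢ t ∧ s = r is derivable in AX_CLL. -/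
open Classical

/-!
Distributing `∧` over `∨` on both sides reduces `t ∧ s` to a disjunction of conjunctions
`(□ᵢ aᵢ.xᵢ) ∧ (□ⱼ bⱼ.yⱼ)` of two choices that are injective in prefixes. If the two prefix
sets differ, such a conjunction is `⊥`; otherwise, after permuting the second choice so that
its prefixes come in the same order, the conjunction moves under the prefixes, giving
`□ᵢ aᵢ.(xᵢ ∧ yᵢ)`, and each `xᵢ ∧ yᵢ` is normalised by induction on `t`. A `⊥` under a prefix
makes the whole choice `⊥`, and `⊥` disjuncts disappear.
-/

theorem List.exists_perm_map_fst {α β : Type*} [Nonempty β] {l m : List (α × β)}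
    (hm : (m.map Prod.fst).Nodup) (hkeys : (l.map Prod.fst).Perm (m.map Prod.fst)) :
    ∃ g : α → β, m.Perm (l.map fun x => (x.1, g x.1)) := by
  classical
  let g : α → β := fun a => if h : ∃ b, (a, b) ∈ m then h.choose else Classical.arbitrary β
  have hg : ∀ y ∈ m, (y.1, g y.1) = y := by
    intro y hy
    have h : ∃ b, (y.1, b) ∈ m := ⟨y.2, hy⟩
    have hmem : (y.1, g y.1) ∈ m := by simpa only [g, dif_pos h] using h.choose_spec
    exact List.inj_on_of_nodup_map hm hmem hy rfl
  refine ⟨g, ?_⟩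
  calc m = (m.map Prod.fst).map fun a => (a, g a) := by
        rw [List.map_map]
        exact ((List.map_congr_left hg).trans (List.map_id _)).symm
    List.Perm _ ((l.map Prod.fst).map fun a => (a, g a)) := hkeys.symm.map _
    _ = l.map fun x => (x.1, g x.1) := List.map_map

namespace Proc

variable {Act : Type}

instance : Nonempty (Proc Act) := ⟨nil⟩

def DerivEq (t s : Proc Act) : Prop := Deriv t s ∧ Deriv s t

namespace DerivEq

theorem rfl {t : Proc Act} : DerivEq t t := ⟨.refl t, .refl t⟩

theorem symm {t s : Proc Act} (h : DerivEq t s) : DerivEq s t := ⟨h.2, h.1⟩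

theorem trans {t s u : Proc Act} (h : DerivEq t s) (h' : DerivEq s u) : DerivEq t u :=
  ⟨h.1.trans h'.1, h'.2.trans h.2⟩

instance : @_root_.Trans (Proc Act) (Proc Act) (Proc Act) DerivEq DerivEq DerivEq := ⟨trans⟩

theorem pre_congr {α : ActT Act} {t t' : Proc Act} (h : DerivEq t t') :
    DerivEq (pre α t) (pre α t') := ⟨.mono_pre h.1, .mono_pre h.2⟩

theorem ec_congr {s s' t t' : Proc Act} (hs : DerivEq s s') (ht : DerivEq t t') :
    DerivEq (ec s t) (ec s' t') := ⟨.mono_ec hs.1 ht.1, .mono_ec hs.2 ht.2⟩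

theorem conj_congr {s s' t t' : Proc Act} (hs : DerivEq s s') (ht : DerivEq t t') :
    DerivEq (conj s t) (conj s' t') := ⟨.mono_conj hs.1 ht.1, .mono_conj hs.2 ht.2⟩

theorem disj_congr {s s' t t' : Proc Act} (hs : DerivEq s s') (ht : DerivEq t t') :
    DerivEq (disj s t) (disj s' t') := ⟨.mono_disj hs.1 ht.1, .mono_disj hs.2 ht.2⟩

variable {x y z : Proc Act}

theorem pre_bot {a : Act} : DerivEq (pre (ActT.act a) (bot : Proc Act)) bot :=
  ⟨.pre_bot₁, .pre_bot₂⟩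

theorem ec_comm : DerivEq (ec x y) (ec y x) := ⟨.ec_comm, .ec_comm⟩

theorem ec_assoc : DerivEq (ec (ec x y) z) (ec x (ec y z)) := ⟨.ec_assoc₁, .ec_assoc₂⟩

theorem ec_left_comm : DerivEq (ec x (ec y z)) (ec y (ec x z)) :=
  ec_assoc.symm.trans ((ec_congr ec_comm rfl).trans ec_assoc)

theorem ec_nil : DerivEq (ec x nil) x := ⟨.ec_nil₁, .ec_nil₂⟩

theorem ec_bot : DerivEq (ec x bot) bot := ⟨.ec_bot₁, .ec_bot₂⟩

theorem bot_ec : DerivEq (ec bot x) bot := ec_comm.trans ec_bot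

theorem disj_comm : DerivEq (disj x y) (disj y x) := ⟨.disj_comm, .disj_comm⟩

theorem disj_assoc : DerivEq (disj (disj x y) z) (disj x (disj y z)) :=
  ⟨.disj_assoc₂, .disj_assoc₁⟩

theorem disj_bot : DerivEq (disj x bot) x := ⟨.disj_bot₁, .disj_bot₂⟩

theorem bot_disj : DerivEq (disj bot x) x := disj_comm.trans disj_bot

theorem conj_comm : DerivEq (conj x y) (conj y x) := ⟨.conj_comm, .conj_comm⟩

theorem conj_bot : DerivEq (conj x bot) bot := ⟨.conj_bot₁, .conj_bot₂⟩

theorem conj_disj : DerivEq (conj x (disj y z)) (disj (conj x y) (conj x z)) := by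
  refine ⟨.ds_conj, (Deriv.mono_disj ?_ ?_).trans .disj_idem₁⟩
  · exact .mono_conj (.refl x) .disj_le
  · exact .mono_conj (.refl x) (Deriv.disj_le.trans .disj_comm)

end DerivEq

theorem foldl_ec_derivEq (l : List (Proc Act)) (t : Proc Act) :
    DerivEq (l.foldl ec t) (ec t (ecList l)) := by
  induction l generalizing t with
  | nil => exact DerivEq.ec_nil.symm
  | cons u l ih =>
    calc DerivEq _ (ec (ec t u) (ecList l)) := ih (ec t u)
      DerivEq _ (ec t (ec u (ecList l))) := DerivEq.ec_assoc
      DerivEq _ (ec t (ecList (u :: l))) := DerivEq.ec_congr .rfl (ih u).symm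

theorem ecList_cons (t : Proc Act) (l : List (Proc Act)) :
    DerivEq (ecList (t :: l)) (ec t (ecList l)) :=
  foldl_ec_derivEq l t

theorem ecList_perm {l l' : List (Proc Act)} (h : l.Perm l') :
    DerivEq (ecList l) (ecList l') := by
  induction h with
  | nil => exact .rfl
  | cons t _ ih =>
    exact (ecList_cons ..).trans ((DerivEq.ec_congr .rfl ih).trans (ecList_cons ..).symm)
  | swap t u l =>
    calc DerivEq _ (ec u (ec t (ecList l))) :=
          (ecList_cons ..).trans (DerivEq.ec_congr .rfl (ecList_cons ..))
      DerivEq _ (ec t (ec u (ecList l))) := DerivEq.ec_left_comm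
      DerivEq _ (ecList (t :: u :: l)) :=
          (DerivEq.ec_congr .rfl (ecList_cons ..).symm).trans (ecList_cons ..).symm
  | trans _ _ ih₁ ih₂ => exact ih₁.trans ih₂

theorem ecPre_perm {l m : List (Act × Proc Act)} (h : l.Perm m) :
    DerivEq (ecPre l) (ecPre m) :=
  ecList_perm (h.map _)

theorem foldl_disj_derivEq (l : List (Proc Act)) (t : Proc Act) :
    DerivEq (l.foldl disj t) (disj t (djList l)) := by
  induction l generalizing t with
  | nil => exact DerivEq.disj_bot.symm
  | cons u l ih =>
    calc DerivEq _ (disj (disj t u) (djList l)) := ih (disj t u)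
      DerivEq _ (disj t (disj u (djList l))) := DerivEq.disj_assoc
      DerivEq _ (disj t (djList (u :: l))) := DerivEq.disj_congr .rfl (ih u).symm

theorem djList_cons (t : Proc Act) (l : List (Proc Act)) :
    DerivEq (djList (t :: l)) (disj t (djList l)) :=
  foldl_disj_derivEq l t

theorem djList_append (l l' : List (Proc Act)) :
    DerivEq (djList (l ++ l')) (disj (djList l) (djList l')) := by
  induction l with
  | nil => exact DerivEq.bot_disj.symm
  | cons t l ih =>
    calc DerivEq _ (disj t (disj (djList l) (djList l'))) :=
          (djList_cons ..).trans (DerivEq.disj_congr .rfl ih)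
      DerivEq _ (disj (djList (t :: l)) (djList l')) :=
          DerivEq.disj_assoc.symm.trans (DerivEq.disj_congr (djList_cons ..).symm .rfl)

theorem conj_djList (t : Proc Act) (l : List (Proc Act)) :
    DerivEq (conj t (djList l)) (djList (l.map (conj t))) := by
  induction l with
  | nil => exact DerivEq.conj_bot
  | cons u l ih =>
    calc DerivEq _ (disj (conj t u) (conj t (djList l))) :=
          (DerivEq.conj_congr .rfl (djList_cons ..)).trans DerivEq.conj_disj
      DerivEq _ (djList ((u :: l).map (conj t))) :=
          (DerivEq.disj_congr .rfl ih).trans (djList_cons ..).symm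

def Normalizable (t : Proc Act) : Prop := ∃ r, NF r ∧ DerivEq t r

theorem Normalizable.of_derivEq {t t' : Proc Act} (h : DerivEq t t') (ht' : Normalizable t') :
    Normalizable t :=
  let ⟨r, hr, h'⟩ := ht'
  ⟨r, hr, h.trans h'⟩

theorem Normalizable.disj {t u : Proc Act} (ht : Normalizable t) (hu : Normalizable u) :
    Normalizable (disj t u) := by
  obtain ⟨r, hr | rfl, htr⟩ := ht
  · obtain ⟨r', hr' | rfl, hur'⟩ := hu
    · obtain ⟨ls, hne, hnodup, hsub⟩ := hr
      obtain ⟨ls', -, hnodup', hsub'⟩ := hr'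
      refine ⟨djList ((ls ++ ls').map ecPre), Or.inl ?_, ?_⟩
      · refine NFB.mk (ls ++ ls') (by simp [hne]) ?_ ?_ <;> simp only [List.mem_append] <;>
          rintro l (hl | hl)
        exacts [hnodup l hl, hnodup' l hl, hsub l hl, hsub' l hl]
      · rw [List.map_append]
        exact (DerivEq.disj_congr htr hur').trans (djList_append ..).symm
    · exact ⟨r, Or.inl hr, (DerivEq.disj_congr htr hur').trans DerivEq.disj_bot⟩
  · exact hu.of_derivEq ((DerivEq.disj_congr htr .rfl).trans DerivEq.bot_disj)

theorem normalizable_djList {l : List (Proc Act)} (h : ∀ t ∈ l, Normalizable t) :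
    Normalizable (djList l) := by
  induction l with
  | nil => exact ⟨bot, Or.inr rfl, .rfl⟩
  | cons t l ih =>
    rw [List.forall_mem_cons] at h
    exact (h.1.disj (ih h.2)).of_derivEq (djList_cons ..)

theorem normalizable_conj_djList {t : Proc Act} {l : List (Proc Act)}
    (h : ∀ u ∈ l, Normalizable (conj t u)) : Normalizable (conj t (djList l)) :=
  (normalizable_djList (List.forall_mem_map.2 h)).of_derivEq (conj_djList t l)

theorem normalizable_djList_conj {t : Proc Act} {l : List (Proc Act)}
    (h : ∀ u ∈ l, Normalizable (conj u t)) : Normalizable (conj (djList l) t) :=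
  (normalizable_conj_djList fun u hu => (h u hu).of_derivEq DerivEq.conj_comm).of_derivEq
    DerivEq.conj_comm

theorem nfb_ecPre {l : List (Act × Proc Act)} (hl : (l.map Prod.fst).Nodup)
    (h : ∀ x ∈ l, NFB x.2) : NFB (ecPre l) :=
  NFB.mk [l] (List.cons_ne_nil _ _) (by simpa using hl) (by simpa using h)

theorem ecPre_derivEq_bot_or_nfb {l : List (Act × Proc Act)} (h : ∀ x ∈ l, Normalizable x.2) :
    DerivEq (ecPre l) bot ∨ ∃ l' : List (Act × Proc Act), l'.map Prod.fst = l.map Prod.fst ∧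
      (∀ x ∈ l', NFB x.2) ∧ DerivEq (ecPre l) (ecPre l') := by
  induction l with
  | nil => exact Or.inr ⟨[], rfl, by simp, .rfl⟩
  | cons x l ih =>
    rw [List.forall_mem_cons] at h
    obtain ⟨⟨r, hr, hxr⟩, hl⟩ := h
    have hhead : DerivEq (ecPre (x :: l)) (ec (pre (ActT.act x.1) r) (ecPre l)) :=
      (ecList_cons ..).trans (DerivEq.ec_congr (DerivEq.pre_congr hxr) .rfl)
    rcases hr with hr | rfl
    · rcases ih hl with hbot | ⟨l', hkeys, hbodies, hll'⟩
      · exact Or.inl (hhead.trans ((DerivEq.ec_congr .rfl hbot).trans DerivEq.ec_bot))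
      · refine Or.inr ⟨(x.1, r) :: l', by simp [hkeys],
          List.forall_mem_cons.2 ⟨hr, hbodies⟩, ?_⟩
        exact hhead.trans ((DerivEq.ec_congr .rfl hll').trans (ecList_cons ..).symm)
    · exact Or.inl (hhead.trans ((DerivEq.ec_congr DerivEq.pre_bot .rfl).trans DerivEq.bot_ec))

theorem normalizable_ecPre {l : List (Act × Proc Act)} (hl : (l.map Prod.fst).Nodup)
    (h : ∀ x ∈ l, Normalizable x.2) : Normalizable (ecPre l) := by
  rcases ecPre_derivEq_bot_or_nfb h with hbot | ⟨l', hkeys, hbodies, hll'⟩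
  · exact ⟨bot, Or.inr rfl, hbot⟩
  · exact ⟨ecPre l', Or.inl (nfb_ecPre (hkeys ▸ hl) hbodies), hll'⟩

theorem normalizable_conj_ecPre {l m : List (Act × Proc Act)} (hl : (l.map Prod.fst).Nodup)
    (hm : (m.map Prod.fst).Nodup) (h : ∀ x ∈ l, ∀ y ∈ m, Normalizable (conj x.2 y.2)) :
    Normalizable (conj (ecPre l) (ecPre m)) := by
  by_cases hkeys : {a | a ∈ l.map Prod.fst} = {a | a ∈ m.map Prod.fst}
  swap
  · exact ⟨bot, Or.inr rfl, Deriv.ecc1₁ l m hkeys, Deriv.ecc1₂ l m hkeys⟩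
  have hperm : (l.map Prod.fst).Perm (m.map Prod.fst) :=
    (List.perm_ext_iff_of_nodup hl hm).2 (Set.ext_iff.1 hkeys)
  obtain ⟨g, hg⟩ := List.exists_perm_map_fst hm hperm
  -- each body of `l` next to the body of `m` under the same prefix
  let tr := l.map fun x => (x.1, x.2, g x.1)
  have htr : tr.map Prod.fst = l.map Prod.fst := by simp [tr, Function.comp_def]
  have hpush : DerivEq (conj (ecPre l) (ecPre m))
      (ecPre (tr.map fun x => (x.1, conj x.2.1 x.2.2))) := by
    have h₃ := Deriv.ecc3 tr (htr ▸ hl)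
    have h₂ := Deriv.ecc2 tr
    have hleft : tr.map (fun x => (x.1, x.2.1)) = l := by simp [tr, Function.comp_def]
    have hright : tr.map (fun x => (x.1, x.2.2)) = l.map fun x => (x.1, g x.1) := by
      simp [tr, Function.comp_def]
    rw [hleft, hright] at h₃ h₂
    exact (DerivEq.conj_congr .rfl (ecPre_perm hg)).trans ⟨h₃, h₂⟩
  refine (normalizable_ecPre (by simpa [tr, Function.comp_def] using hl) ?_).of_derivEq hpush
  simp only [tr, List.map_map, List.forall_mem_map]
  exact fun x hx => h x hx (x.1, g x.1) (hg.mem_iff.2 (List.mem_map_of_mem hx))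

theorem normalizable_conj_of_nfb {t : Proc Act} (ht : NFB t) :
    ∀ {s : Proc Act}, NFB s → Normalizable (conj t s) := by
  induction ht with
  | mk ls _ hnodup _ ih =>
    rintro _ ⟨ls', -, hnodup', hsub'⟩
    refine normalizable_djList_conj (List.forall_mem_map.2 fun l hl => ?_)
    refine normalizable_conj_djList (List.forall_mem_map.2 fun m hm => ?_)
    exact normalizable_conj_ecPre (hnodup l hl) (hnodup' m hm)
      fun x hx y hy => ih l hl x hx (hsub' m hm y hy)

/-- Conjunctions of normal forms reduce in AX_CLL to a normal form. -/
theorem stmt15 {Act : Type} (t s : Proc Act) (ht : NFB t) (hs : NFB s) :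
    ∃ r : Proc Act, NF r ∧ Deriv (conj t s) r ∧ Deriv r (conj t s) :=
  normalizable_conj_of_nfb ht hs

end Proc
end

section
/- Normal Form Theorem: for every process t of the recursion-free calculus CLL there exists s ∈ NF such that ⊢ t = s is derivable in AX_CLL (i.e., both ⊢ t ≤ s and ⊢ s ≤ t). -/
open Classical

/-!
Normalisation is bottom-up. The axioms distributing `□`, `∧` and `∥_A` over `∨` reduce a
composition of two normal forms to compositions of two menus `□ aᵢ.tᵢ`, and such a composition is
again a menu: for `□` by concatenation, for `∥_A` by the expansion law, and for `∧` by pairing the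
two menus action by action (or it is `⊥`, when their action sets differ). The continuations of the
new menu are normal forms or compositions of strictly smaller ones, hence normalisable by recursion.
Finally `⊥` is absorbing, and a repeated action `a.x □ a.y` is merged into `a.(x ∨ y)`, which restores
injectivity in prefixes.
-/

namespace Proc

variable {Act : Type}

def DEq (s t : Proc Act) : Prop := Deriv s t ∧ Deriv t s

local infix:50 " ≋ " => DEq

namespace DEq

theorem rfl {t : Proc Act} : t ≋ t := ⟨.refl t, .refl t⟩

theorem symm {s t : Proc Act} (h : s ≋ t) : t ≋ s := ⟨h.2, h.1⟩

theorem trans {s t u : Proc Act} (h : s ≋ t) (h' : t ≋ u) : s ≋ u :=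
  ⟨h.1.trans h'.1, h'.2.trans h.2⟩

instance : _root_.Trans (α := Proc Act) DEq DEq DEq := ⟨DEq.trans⟩

theorem pre {α : ActT Act} {s t : Proc Act} (h : s ≋ t) : Proc.pre α s ≋ Proc.pre α t :=
  ⟨.mono_pre h.1, .mono_pre h.2⟩

theorem ec {s s' t t' : Proc Act} (h : s ≋ s') (h' : t ≋ t') : Proc.ec s t ≋ Proc.ec s' t' :=
  ⟨.mono_ec h.1 h'.1, .mono_ec h.2 h'.2⟩

theorem disj {s s' t t' : Proc Act} (h : s ≋ s') (h' : t ≋ t') :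
    Proc.disj s t ≋ Proc.disj s' t' :=
  ⟨.mono_disj h.1 h'.1, .mono_disj h.2 h'.2⟩

theorem conj {s s' t t' : Proc Act} (h : s ≋ s') (h' : t ≋ t') :
    Proc.conj s t ≋ Proc.conj s' t' :=
  ⟨.mono_conj h.1 h'.1, .mono_conj h.2 h'.2⟩

variable {x y z : Proc Act}

theorem ec_comm : Proc.ec x y ≋ Proc.ec y x := ⟨.ec_comm, .ec_comm⟩
theorem ec_assoc : Proc.ec (Proc.ec x y) z ≋ Proc.ec x (Proc.ec y z) := ⟨.ec_assoc₁, .ec_assoc₂⟩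
theorem ec_nil : Proc.ec x nil ≋ x := ⟨.ec_nil₁, .ec_nil₂⟩
theorem ec_bot : Proc.ec x bot ≋ bot := ⟨.ec_bot₁, .ec_bot₂⟩
theorem disj_assoc : Proc.disj (Proc.disj x y) z ≋ Proc.disj x (Proc.disj y z) :=
  ⟨.disj_assoc₂, .disj_assoc₁⟩
theorem disj_comm : Proc.disj x y ≋ Proc.disj y x := ⟨.disj_comm, .disj_comm⟩
theorem disj_bot : Proc.disj x bot ≋ x := ⟨.disj_bot₁, .disj_bot₂⟩
theorem pre_bot {a : Act} : Proc.pre (.act a) (bot : Proc Act) ≋ bot := ⟨.pre_bot₁, .pre_bot₂⟩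
theorem tau_pre : Proc.pre .tau x ≋ x := ⟨.tau_pre₁, .tau_pre₂⟩

end DEq

theorem Deriv.disj_le_right {x y : Proc Act} : Deriv y (disj x y) :=
  Deriv.disj_le.trans Deriv.disj_comm

theorem Deriv.disj_lub {x y z : Proc Act} (h : Deriv x z) (h' : Deriv y z) : Deriv (disj x y) z :=
  (Deriv.mono_disj h h').trans Deriv.disj_idem₁

theorem deq_foldl_congr {op : Proc Act → Proc Act → Proc Act}
    (hop : ∀ a a' b, a ≋ a' → op a b ≋ op a' b) (ts : List (Proc Act)) {u v : Proc Act}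
    (h : u ≋ v) : ts.foldl op u ≋ ts.foldl op v := by
  induction ts generalizing u v with
  | nil => exact h
  | cons t ts ih => exact ih (hop _ _ t h)

theorem deq_foldl_assoc {op : Proc Act → Proc Act → Proc Act}
    (hop : ∀ a a' b, a ≋ a' → op a b ≋ op a' b)
    (hassoc : ∀ x y z, op (op x y) z ≋ op x (op y z)) (ts : List (Proc Act)) {x y : Proc Act} :
    ts.foldl op (op x y) ≋ op x (ts.foldl op y) := by
  induction ts generalizing y with
  | nil => exact .rfl
  | cons t ts ih => exact (deq_foldl_congr hop ts (hassoc x y t)).trans ih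

theorem deq_ecList_cons {t : Proc Act} {ts : List (Proc Act)} :
    ecList (t :: ts) ≋ ec t (ecList ts) := by
  cases ts with
  | nil => exact DEq.ec_nil.symm
  | cons u us =>
    exact deq_foldl_assoc (op := ec) (fun _ _ _ h => h.ec .rfl) (fun _ _ _ => DEq.ec_assoc) us

theorem deq_djList_cons {t : Proc Act} {ts : List (Proc Act)} :
    djList (t :: ts) ≋ disj t (djList ts) := by
  cases ts with
  | nil => exact DEq.disj_bot.symm
  | cons u us =>
    exact deq_foldl_assoc (op := disj) (fun _ _ _ h => h.disj .rfl) (fun _ _ _ => DEq.disj_assoc) us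

theorem deq_ecList_append (L₁ L₂ : List (Proc Act)) :
    ecList (L₁ ++ L₂) ≋ ec (ecList L₁) (ecList L₂) := by
  induction L₁ with
  | nil => exact (DEq.ec_comm.trans DEq.ec_nil).symm
  | cons t ts ih =>
    calc ecList (t :: (ts ++ L₂)) ≋ ec t (ecList (ts ++ L₂)) := deq_ecList_cons
      _ ≋ ec t (ec (ecList ts) (ecList L₂)) := DEq.rfl.ec ih
      _ ≋ ec (ec t (ecList ts)) (ecList L₂) := DEq.ec_assoc.symm
      _ ≋ ec (ecList (t :: ts)) (ecList L₂) := deq_ecList_cons.symm.ec .rfl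

theorem deq_djList_append (L₁ L₂ : List (Proc Act)) :
    djList (L₁ ++ L₂) ≋ disj (djList L₁) (djList L₂) := by
  induction L₁ with
  | nil => exact (DEq.disj_comm.trans DEq.disj_bot).symm
  | cons t ts ih =>
    calc djList (t :: (ts ++ L₂)) ≋ disj t (djList (ts ++ L₂)) := deq_djList_cons
      _ ≋ disj t (disj (djList ts) (djList L₂)) := DEq.rfl.disj ih
      _ ≋ disj (disj t (djList ts)) (djList L₂) := DEq.disj_assoc.symm
      _ ≋ disj (djList (t :: ts)) (djList L₂) := deq_djList_cons.symm.disj .rfl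

theorem deq_ecList_perm {L₁ L₂ : List (Proc Act)} (h : L₁.Perm L₂) : ecList L₁ ≋ ecList L₂ := by
  induction h with
  | nil => exact .rfl
  | cons t _ ih => exact deq_ecList_cons.trans ((DEq.rfl.ec ih).trans deq_ecList_cons.symm)
  | swap t u l =>
    calc ecList (u :: t :: l) ≋ ec u (ec t (ecList l)) :=
          deq_ecList_cons.trans (DEq.rfl.ec deq_ecList_cons)
      _ ≋ ec (ec u t) (ecList l) := DEq.ec_assoc.symm
      _ ≋ ec (ec t u) (ecList l) := DEq.ec_comm.ec .rfl
      _ ≋ ec t (ec u (ecList l)) := DEq.ec_assoc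
      _ ≋ ecList (t :: u :: l) := (deq_ecList_cons.trans (DEq.rfl.ec deq_ecList_cons)).symm
  | trans _ _ ih₁ ih₂ => exact ih₁.trans ih₂

theorem deq_ecPre_cons {a : Act} {x : Proc Act} {l : List (Act × Proc Act)} :
    ecPre ((a, x) :: l) ≋ ec (pre (.act a) x) (ecPre l) := deq_ecList_cons

theorem deq_ecPre_append (l₁ l₂ : List (Act × Proc Act)) :
    ecPre (l₁ ++ l₂) ≋ ec (ecPre l₁) (ecPre l₂) := by
  unfold ecPre
  rw [List.map_append]
  exact deq_ecList_append _ _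

theorem deq_ecPre_perm {l₁ l₂ : List (Act × Proc Act)} (h : l₁.Perm l₂) : ecPre l₁ ≋ ecPre l₂ :=
  deq_ecList_perm (h.map _)

def size : Proc Act → ℕ
  | nil => 1
  | bot => 1
  | pre _ t => size t + 1
  | ec s t => size s + size t + 1
  | conj s t => size s + size t + 1
  | disj s t => size s + size t + 1
  | par _ s t => size s + size t + 1

theorem size_le_size_foldl {op : Proc Act → Proc Act → Proc Act}
    (hop : ∀ a b, size a ≤ size (op a b) ∧ size b ≤ size (op a b)) (ts : List (Proc Act))
    (acc : Proc Act) : ∀ t ∈ acc :: ts, size t ≤ size (ts.foldl op acc) := by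
  induction ts generalizing acc with
  | nil => simp
  | cons u ts ih =>
    intro t ht
    have hacc := ih (op acc u) (op acc u) List.mem_cons_self
    rcases List.mem_cons.mp ht with rfl | ht
    · exact (hop t u).1.trans hacc
    · rcases List.mem_cons.mp ht with rfl | ht
      · exact (hop acc t).2.trans hacc
      · exact ih (op acc u) t (List.mem_cons_of_mem _ ht)

theorem size_le_size_ecList {t : Proc Act} {ts : List (Proc Act)} (h : t ∈ ts) :
    size t ≤ size (ecList ts) := by
  cases ts with
  | nil => cases h
  | cons u us => exact size_le_size_foldl (fun a b => by simp only [size]; omega) us u t h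

theorem size_le_size_djList {t : Proc Act} {ts : List (Proc Act)} (h : t ∈ ts) :
    size t ≤ size (djList ts) := by
  cases ts with
  | nil => cases h
  | cons u us => exact size_le_size_foldl (fun a b => by simp only [size]; omega) us u t h

theorem size_lt_size_ecPre {x : Act × Proc Act} {l : List (Act × Proc Act)} (h : x ∈ l) :
    size x.2 < size (ecPre l) :=
  size_le_size_ecList (List.mem_map_of_mem (f := fun y : Act × Proc Act => pre (.act y.1) y.2) h)

theorem basic_foldl {op : Proc Act → Proc Act → Proc Act}
    (hop : ∀ a b, Basic a → Basic b → Basic (op a b)) (ts : List (Proc Act)) (acc : Proc Act)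
    (h : ∀ t ∈ acc :: ts, Basic t) : Basic (ts.foldl op acc) := by
  induction ts generalizing acc with
  | nil => exact h acc List.mem_cons_self
  | cons u ts ih =>
    refine ih (op acc u) (List.forall_mem_cons.mpr ⟨?_, fun t ht => h t (by simp [ht])⟩)
    exact hop _ _ (h acc List.mem_cons_self) (h u (by simp))

theorem basic_ecList {ts : List (Proc Act)} (h : ∀ t ∈ ts, Basic t) : Basic (ecList ts) := by
  cases ts with
  | nil => exact .nil
  | cons t ts => exact basic_foldl (fun _ _ => .ec) ts t h

theorem basic_ecPre {l : List (Act × Proc Act)} (h : ∀ x ∈ l, Basic x.2) : Basic (ecPre l) := by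
  refine basic_ecList ?_
  simp only [List.mem_map]
  rintro _ ⟨x, hx, rfl⟩
  exact .pre (h x hx)

theorem NFB.basic {p : Proc Act} (h : NFB p) : Basic p := by
  induction h with
  | mk ls hne _ _ ih =>
    obtain ⟨m, ms, rfl⟩ := List.exists_cons_of_ne_nil hne
    refine basic_foldl (fun _ _ => .disj) (ms.map ecPre) (ecPre m) ?_
    simp only [← List.map_cons, List.mem_map]
    rintro _ ⟨m', hm', rfl⟩
    exact basic_ecPre (ih m' hm')

def NFMenu (l : List (Act × Proc Act)) : Prop := (l.map Prod.fst).Nodup ∧ ∀ x ∈ l, NFB x.2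

theorem NFMenu.nfb {l : List (Act × Proc Act)} (h : NFMenu l) : NFB (ecPre l) :=
  NFB.mk [l] (List.cons_ne_nil _ _) (by simpa using h.1) (by simpa using h.2)

theorem NFB.exists_disj_deq {p q : Proc Act} (hp : NFB p) (hq : NFB q) :
    ∃ s, NFB s ∧ disj p q ≋ s := by
  obtain ⟨ls₁, hne₁, hnodup₁, hsub₁⟩ := hp
  obtain ⟨ls₂, -, hnodup₂, hsub₂⟩ := hq
  refine ⟨_, NFB.mk (ls₁ ++ ls₂) (by simp [hne₁]) ?_ ?_, ?_⟩
  · exact fun l hl => (List.mem_append.mp hl).elim (hnodup₁ l) (hnodup₂ l)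
  · exact fun l hl => (List.mem_append.mp hl).elim (hsub₁ l) (hsub₂ l)
  · rw [List.map_append]
    exact (deq_djList_append _ _).symm

theorem deq_ec_pre_pre {a : Act} {x y : Proc Act} (hx : Basic x) (hy : Basic y) :
    ec (pre (.act a) x) (pre (.act a) y) ≋ pre (.act a) (disj x y) :=
  ⟨(Deriv.mono_ec (.mono_pre .disj_le) (.mono_pre .disj_le_right)).trans .ec_idem₁, .ds_pre hx hy⟩

theorem NFMenu.exists_ec_pre_deq {a : Act} {x : Proc Act} {l : List (Act × Proc Act)}
    (hx : NFB x) (hl : NFMenu l) : ∃ l', NFMenu l' ∧ ec (pre (.act a) x) (ecPre l) ≋ ecPre l' := by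
  by_cases ha : a ∈ l.map Prod.fst
  · obtain ⟨y, hy⟩ : ∃ y, (a, y) ∈ l := by simpa using ha
    set r := l.erase (a, y)
    have hperm : l.Perm ((a, y) :: r) := List.perm_cons_erase hy
    have hr : a ∉ r.map Prod.fst ∧ (r.map Prod.fst).Nodup := by
      simpa using (hperm.map Prod.fst).nodup_iff.mp hl.1
    obtain ⟨z, hz, hxyz⟩ := hx.exists_disj_deq (hl.2 _ hy)
    refine ⟨(a, z) :: r, ⟨List.nodup_cons.mpr hr, ?_⟩, ?_⟩
    · simpa using ⟨hz, fun b w hw => hl.2 (b, w) (List.mem_of_mem_erase hw)⟩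
    calc ec (pre (.act a) x) (ecPre l)
        ≋ ec (pre (.act a) x) (ec (pre (.act a) y) (ecPre r)) :=
          DEq.rfl.ec ((deq_ecPre_perm hperm).trans deq_ecPre_cons)
      _ ≋ ec (ec (pre (.act a) x) (pre (.act a) y)) (ecPre r) := DEq.ec_assoc.symm
      _ ≋ ec (pre (.act a) z) (ecPre r) :=
          ((deq_ec_pre_pre hx.basic (hl.2 _ hy).basic).trans hxyz.pre).ec .rfl
      _ ≋ ecPre ((a, z) :: r) := deq_ecPre_cons.symm
  · refine ⟨(a, x) :: l, ⟨List.nodup_cons.mpr ⟨ha, hl.1⟩, ?_⟩, deq_ecPre_cons.symm⟩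
    simpa using ⟨hx, fun b w hw => hl.2 (b, w) hw⟩

def HasNF (t : Proc Act) : Prop := ∃ s, NF s ∧ t ≋ s

theorem HasNF.of_deq {t t' : Proc Act} (h : t ≋ t') (h' : HasNF t') : HasNF t :=
  let ⟨s, hs, hts⟩ := h'
  ⟨s, hs, h.trans hts⟩

theorem hasNF_bot : HasNF (bot : Proc Act) := ⟨bot, Or.inr rfl, .rfl⟩

theorem NFB.hasNF {t : Proc Act} (h : NFB t) : HasNF t := ⟨t, Or.inl h, .rfl⟩

theorem ecPre_deq_bot_or_exists_nfMenu {l : List (Act × Proc Act)} (h : ∀ x ∈ l, HasNF x.2) :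
    ecPre l ≋ bot ∨ ∃ l', NFMenu l' ∧ ecPre l ≋ ecPre l' := by
  induction l with
  | nil => exact Or.inr ⟨[], ⟨List.nodup_nil, by simp⟩, .rfl⟩
  | cons x l ih =>
    obtain ⟨a, t⟩ := x
    obtain ⟨s, hs, hts⟩ := h (a, t) List.mem_cons_self
    have hcons : ecPre ((a, t) :: l) ≋ ec (pre (.act a) s) (ecPre l) :=
      deq_ecPre_cons.trans (hts.pre.ec .rfl)
    rcases ih fun y hy => h y (List.mem_cons_of_mem _ hy) with hbot | ⟨l', hl', hll'⟩
    · exact Or.inl (hcons.trans ((DEq.rfl.ec hbot).trans DEq.ec_bot))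
    rcases hs with hs | rfl
    · obtain ⟨l'', hl'', h''⟩ := hl'.exists_ec_pre_deq (a := a) hs
      exact Or.inr ⟨l'', hl'', hcons.trans ((DEq.rfl.ec hll').trans h'')⟩
    · exact Or.inl (hcons.trans ((DEq.pre_bot.ec .rfl).trans (DEq.ec_comm.trans DEq.ec_bot)))

theorem hasNF_ecPre {l : List (Act × Proc Act)} (h : ∀ x ∈ l, HasNF x.2) : HasNF (ecPre l) := by
  rcases ecPre_deq_bot_or_exists_nfMenu h with hbot | ⟨l', hl', hll'⟩
  · exact hasNF_bot.of_deq hbot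
  · exact hl'.nfb.hasNF.of_deq hll'

theorem HasNF.pre {t : Proc Act} (h : HasNF t) : ∀ α : ActT Act, HasNF (pre α t)
  | .tau => h.of_deq DEq.tau_pre
  | .act a => hasNF_ecPre (l := [(a, t)]) (by simpa using h)

theorem HasNF.disj {s t : Proc Act} (hs : HasNF s) (ht : HasNF t) : HasNF (disj s t) := by
  obtain ⟨s', hs', hss'⟩ := hs
  obtain ⟨t', ht', htt'⟩ := ht
  refine HasNF.of_deq (hss'.disj htt') ?_
  rcases hs' with hs' | rfl
  · rcases ht' with ht' | rfl
    · obtain ⟨u, hu, h⟩ := hs'.exists_disj_deq ht'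
      exact hu.hasNF.of_deq h
    · exact hs'.hasNF.of_deq DEq.disj_bot
  · exact ⟨t', ht', DEq.disj_comm.trans DEq.disj_bot⟩

theorem hasNF_djList {L : List (Proc Act)} (hL : L ≠ []) (h : ∀ t ∈ L, HasNF t) :
    HasNF (djList L) := by
  induction L with
  | nil => exact absurd rfl hL
  | cons t L ih =>
    rcases eq_or_ne L [] with rfl | hL'
    · exact h t List.mem_cons_self
    · exact ((h t List.mem_cons_self).disj
        (ih hL' fun u hu => h u (List.mem_cons_of_mem _ hu))).of_deq deq_djList_cons

structure IsDistribOp (op : Proc Act → Proc Act → Proc Act) : Prop where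
  mono : ∀ {a a' b b'}, Deriv a a' → Deriv b b' → Deriv (op a b) (op a' b')
  comm : ∀ x y, Deriv (op x y) (op y x)
  distrib : ∀ x y z, Deriv (op x (disj y z)) (disj (op x y) (op x z))
  bot : ∀ x, op x bot ≋ bot

theorem isDistribOp_ec : IsDistribOp (ec : Proc Act → Proc Act → Proc Act) :=
  ⟨.mono_ec, fun _ _ => .ec_comm, fun _ _ _ => .ds_ec, fun _ => DEq.ec_bot⟩

theorem isDistribOp_conj : IsDistribOp (conj : Proc Act → Proc Act → Proc Act) :=
  ⟨.mono_conj, fun _ _ => .conj_comm, fun _ _ _ => .ds_conj, fun _ => ⟨.conj_bot₁, .conj_bot₂⟩⟩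

theorem isDistribOp_par (A : Set Act) : IsDistribOp (par A) :=
  ⟨.mono_par, fun _ _ => .par_comm, fun _ _ _ => .ds_par, fun _ => ⟨.par_bot₁, .par_bot₂⟩⟩

namespace IsDistribOp

variable {op : Proc Act → Proc Act → Proc Act}

theorem congr (hop : IsDistribOp op) {a a' b b' : Proc Act} (h : a ≋ a') (h' : b ≋ b') :
    op a b ≋ op a' b' :=
  ⟨hop.mono h.1 h'.1, hop.mono h.2 h'.2⟩

theorem hasNF_comm (hop : IsDistribOp op) {x y : Proc Act} (h : HasNF (op x y)) :
    HasNF (op y x) :=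
  h.of_deq ⟨hop.comm y x, hop.comm x y⟩

theorem deq_distrib (hop : IsDistribOp op) (x y z : Proc Act) :
    op x (disj y z) ≋ disj (op x y) (op x z) :=
  ⟨hop.distrib x y z,
    Deriv.disj_lub (hop.mono (.refl x) .disj_le) (hop.mono (.refl x) .disj_le_right)⟩

theorem hasNF_djList_right (hop : IsDistribOp op) {x : Proc Act} {L : List (Proc Act)}
    (hL : L ≠ []) (h : ∀ t ∈ L, HasNF (op x t)) : HasNF (op x (djList L)) := by
  induction L with
  | nil => exact absurd rfl hL
  | cons t L ih =>
    rcases eq_or_ne L [] with rfl | hL'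
    · exact h t List.mem_cons_self
    · refine HasNF.of_deq ((hop.congr .rfl deq_djList_cons).trans (hop.deq_distrib _ _ _)) ?_
      exact (h t List.mem_cons_self).disj (ih hL' fun u hu => h u (List.mem_cons_of_mem _ hu))

theorem hasNF_of_nfMenu (hop : IsDistribOp op) {u v : Proc Act} (hu : NFB u) (hv : NFB v)
    (h : ∀ m m', NFMenu m → NFMenu m' → size (ecPre m) ≤ size u → size (ecPre m') ≤ size v →
      HasNF (op (ecPre m) (ecPre m'))) :
    HasNF (op u v) := by
  obtain ⟨ls, hls, hnodup, hsub⟩ := hu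
  obtain ⟨ls', hls', hnodup', hsub'⟩ := hv
  refine hop.hasNF_djList_right (by simpa using hls') ?_
  simp only [List.mem_map]
  rintro _ ⟨m', hm', rfl⟩
  refine hop.hasNF_comm (hop.hasNF_djList_right (by simpa using hls) ?_)
  simp only [List.mem_map]
  rintro _ ⟨m, hm, rfl⟩
  refine hop.hasNF_comm (h m m' ⟨hnodup m hm, hsub m hm⟩ ⟨hnodup' m' hm', hsub' m' hm'⟩ ?_ ?_)
  · exact size_le_size_djList (List.mem_map_of_mem hm)
  · exact size_le_size_djList (List.mem_map_of_mem hm')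

theorem hasNF (hop : IsDistribOp op) (h : ∀ u v, NFB u → NFB v → HasNF (op u v)) {s t : Proc Act}
    (hs : HasNF s) (ht : HasNF t) : HasNF (op s t) := by
  obtain ⟨s', hs', hss'⟩ := hs
  obtain ⟨t', ht', htt'⟩ := ht
  refine HasNF.of_deq (hop.congr hss' htt') ?_
  rcases ht' with ht' | rfl
  · rcases hs' with hs' | rfl
    · exact h s' t' hs' ht'
    · exact hop.hasNF_comm (hasNF_bot.of_deq (hop.bot t'))
  · exact hasNF_bot.of_deq (hop.bot s')

end IsDistribOp

theorem hasNF_ec_of_nfb {u v : Proc Act} (hu : NFB u) (hv : NFB v) : HasNF (ec u v) :=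
  isDistribOp_ec.hasNF_of_nfMenu hu hv fun m m' hm hm' _ _ =>
    (hasNF_ecPre fun x hx => (List.mem_append.mp hx).elim (fun hx => (hm.2 x hx).hasNF)
      fun hx => (hm'.2 x hx).hasNF).of_deq (deq_ecPre_append m m').symm

theorem exists_zip_of_perm_keys {α β γ : Type*} {m : List (α × β)} {m' : List (α × γ)}
    (hm : (m.map Prod.fst).Nodup) (hkeys : (m.map Prod.fst).Perm (m'.map Prod.fst)) :
    ∃ l : List (α × β × γ),
      l.map (fun x => (x.1, x.2.1)) = m ∧ (l.map fun x => (x.1, x.2.2)).Perm m' := by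
  obtain ⟨l, hl, hlm'⟩ : ∃ l : List (α × β × γ),
      l.map (fun x => (x.1, x.2.1)) = m ∧ ∀ x ∈ l, (x.1, x.2.2) ∈ m' := by
    have hmem : ∀ p ∈ m, ∃ c, (p.1, c) ∈ m' := fun p hp => by
      simpa using hkeys.subset (List.mem_map_of_mem hp)
    clear hm hkeys
    induction m with
    | nil => exact ⟨[], rfl, by simp⟩
    | cons p m ih =>
      obtain ⟨c, hc⟩ := hmem p List.mem_cons_self
      obtain ⟨l, hl, hlm'⟩ := ih fun q hq => hmem q (List.mem_cons_of_mem _ hq)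
      exact ⟨(p.1, p.2, c) :: l, by simp [hl], List.forall_mem_cons.mpr ⟨hc, hlm'⟩⟩
  subst hl
  have hlen := hkeys.length_eq
  simp only [List.length_map] at hlen
  refine ⟨l, rfl, (List.Nodup.subperm ?_ ?_).perm_of_length_le (by simp [hlen])⟩
  · exact List.Nodup.of_map Prod.fst (by rw [List.map_map] at hm ⊢; exact hm)
  · simp only [List.subset_def, List.mem_map]
    rintro _ ⟨x, hx, rfl⟩
    exact hlm' x hx

theorem hasNF_conj_ecPre {m m' : List (Act × Proc Act)} (hm : (m.map Prod.fst).Nodup)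
    (hm' : (m'.map Prod.fst).Nodup) (h : ∀ x ∈ m, ∀ y ∈ m', HasNF (conj x.2 y.2)) :
    HasNF (conj (ecPre m) (ecPre m')) := by
  by_cases hkeys : {a | a ∈ m.map Prod.fst} = {a | a ∈ m'.map Prod.fst}
  · have hperm : (m.map Prod.fst).Perm (m'.map Prod.fst) :=
      (List.perm_ext_iff_of_nodup hm hm').mpr (Set.ext_iff.mp hkeys)
    obtain ⟨l, rfl, hl⟩ := exists_zip_of_perm_keys hm hperm
    have hnodup : (l.map Prod.fst).Nodup := by rw [List.map_map] at hm; exact hm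
    refine HasNF.of_deq ((DEq.rfl.conj (deq_ecPre_perm hl).symm).trans
      ⟨.ecc3 l hnodup, .ecc2 l⟩) (hasNF_ecPre ?_)
    simp only [List.mem_map]
    rintro _ ⟨x, hx, rfl⟩
    exact h _ (List.mem_map_of_mem hx) _ (hl.subset (List.mem_map_of_mem hx))
  · exact hasNF_bot.of_deq ⟨.ecc1₁ m m' hkeys, .ecc1₂ m m' hkeys⟩

theorem hasNF_conj_of_nfb {u v : Proc Act} (hu : NFB u) (hv : NFB v) : HasNF (conj u v) :=
  isDistribOp_conj.hasNF_of_nfMenu hu hv fun m m' hm hm' _ _ =>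
    hasNF_conj_ecPre hm.1 hm'.1 fun x hx y hy => hasNF_conj_of_nfb (hm.2 x hx) (hm'.2 y hy)
termination_by size u + size v
decreasing_by
  have := size_lt_size_ecPre hx
  have := size_lt_size_ecPre hy
  omega

noncomputable def expMenu (A : Set Act) (m m' : List (Act × Proc Act)) :
    List (Act × Proc Act) :=
  ((m.filter fun x => decide (x.1 ∉ A)).map fun x => (x.1, par A x.2 (ecPre m'))) ++
  ((m'.filter fun y => decide (y.1 ∉ A)).map fun y => (y.1, par A (ecPre m) y.2)) ++
  m.flatMap fun x => (m'.filter fun y => decide (y.1 = x.1 ∧ x.1 ∈ A)).map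
    fun y => (x.1, par A x.2 y.2)

theorem deq_expTerm (A : Set Act) (m m' : List (Act × Proc Act)) :
    expTerm A m m' ≋ ecPre (expMenu A m m') := by
  have : expTerm A m m' = ec (ec
      (ecPre ((m.filter fun x => decide (x.1 ∉ A)).map fun x => (x.1, par A x.2 (ecPre m'))))
      (ecPre ((m'.filter fun y => decide (y.1 ∉ A)).map fun y => (y.1, par A (ecPre m) y.2))))
      (ecPre (m.flatMap fun x => (m'.filter fun y => decide (y.1 = x.1 ∧ x.1 ∈ A)).map
        fun y => (x.1, par A x.2 y.2))) := by
    simp only [expTerm, ecPre, List.map_map, List.map_flatMap]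
    rfl
  rw [this, expMenu]
  exact ((deq_ecPre_append _ _).trans ((deq_ecPre_append _ _).ec .rfl)).symm

theorem hasNF_par_ecPre {A : Set Act} {m m' : List (Act × Proc Act)}
    (hm : ∀ x ∈ m, Basic x.2) (hm' : ∀ y ∈ m', Basic y.2)
    (h₁ : ∀ x ∈ m, HasNF (par A x.2 (ecPre m'))) (h₂ : ∀ y ∈ m', HasNF (par A (ecPre m) y.2))
    (h₃ : ∀ x ∈ m, ∀ y ∈ m', HasNF (par A x.2 y.2)) : HasNF (par A (ecPre m) (ecPre m')) := by
  refine HasNF.of_deq (DEq.trans ⟨.exp1 A m m', .exp2 A m m' hm hm'⟩ (deq_expTerm A m m'))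
    (hasNF_ecPre ?_)
  simp only [expMenu, List.mem_append, List.mem_map, List.mem_filter, List.mem_flatMap]
  rintro _ ((⟨x, ⟨hx, -⟩, rfl⟩ | ⟨y, ⟨hy, -⟩, rfl⟩) | ⟨x, hx, y, ⟨hy, -⟩, rfl⟩)
  exacts [h₁ x hx, h₂ y hy, h₃ x hx y hy]

theorem hasNF_par_of_nfb (A : Set Act) {u v : Proc Act} (hu : NFB u) (hv : NFB v) :
    HasNF (par A u v) :=
  (isDistribOp_par A).hasNF_of_nfMenu hu hv fun m m' hm hm' _ _ =>
    hasNF_par_ecPre (fun x hx => (hm.2 x hx).basic) (fun y hy => (hm'.2 y hy).basic)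
      (fun x hx => hasNF_par_of_nfb A (hm.2 x hx) hm'.nfb)
      (fun y hy => hasNF_par_of_nfb A hm.nfb (hm'.2 y hy))
      fun x hx y hy => hasNF_par_of_nfb A (hm.2 x hx) (hm'.2 y hy)
termination_by size u + size v
decreasing_by
  · have := size_lt_size_ecPre hx
    omega
  · have := size_lt_size_ecPre hy
    omega
  · have := size_lt_size_ecPre hx
    have := size_lt_size_ecPre hy
    omega

theorem hasNF : ∀ t : Proc Act, HasNF t
  | nil => hasNF_ecPre (l := []) nofun
  | bot => hasNF_bot
  | pre α t => (hasNF t).pre α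
  | ec s t => isDistribOp_ec.hasNF (fun _ _ => hasNF_ec_of_nfb) (hasNF s) (hasNF t)
  | conj s t => isDistribOp_conj.hasNF (fun _ _ => hasNF_conj_of_nfb) (hasNF s) (hasNF t)
  | disj s t => (hasNF s).disj (hasNF t)
  | par A s t => (isDistribOp_par A).hasNF (fun _ _ => hasNF_par_of_nfb A) (hasNF s) (hasNF t)

end Proc

namespace Proc

/-- Normal Form Theorem: every process is provably equal to a normal form. -/
theorem stmt17 {Act : Type} (t : Proc Act) :
    ∃ s : Proc Act, NF s ∧ Deriv t s ∧ Deriv s t :=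
  hasNF t

end Proc
end
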